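/- arXiv:1806.05934 — 2 statements merged into one kernel-verified Lean document; each statement's English description precedes it below -/
import Mathlib

section
/- Define for u, v smooth functions on Ω ⊂ ℝ^d, L u = Δu + k²u and M u = x·∇u − ikβu + ((d−1)/2)u with β ∈ ℝ, k > 0. Then the pointwise (Morawetz–Ludwig) identity holds: conj(Mv)·Lu + Mu·conj(Lv) = ∇·[ conj(Mv)∇u + Mu·conj(∇v) + x(k²u·conj(v) − ∇u·conj(∇v)) ] − ∇u·conj(∇v) − k²u·conj(v). -/
/-!
With `G = k² u conj v - ∇u·conj(∇v)`, the field is `F = conj(Mv) ∇u + Mu conj(∇v) + x G`.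
By the product rule, `div F` consists of `conj(Mv) Δu + Mu conj(Δv)`, the first-order terms
`Σᵢ conj(∂ᵢ Mv) ∂ᵢu + ∂ᵢ Mu conj(∂ᵢv)`, and `div (x G) = d G + x·∇G`. Symmetry of second
derivatives gives the commutator `[∂ᵢ, x·∇] = ∂ᵢ`, hence `∂ᵢ M = M ∂ᵢ + ∂ᵢ`, which turns the
first-order terms into `(d + 1) ∇u·conj(∇v) + x·∇(∇u·conj(∇v))`. The terms
`x·∇(∇u·conj(∇v))` cancel, and what is left is `k² (conj(Mv) u + Mu conj v)`, in which the
`ikβ` terms cancel.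
-/

open Complex

/-- `i`-th partial derivative of a complex-valued function on `ℝ^d`. -/
noncomputable def pd {d : ℕ} (i : Fin d) (f : EuclideanSpace ℝ (Fin d) → ℂ)
    (x : EuclideanSpace ℝ (Fin d)) : ℂ :=
  fderiv ℝ f x (EuclideanSpace.single i 1)

/-- Laplacian of a complex-valued function on `ℝ^d`. -/
noncomputable def lap {d : ℕ} (f : EuclideanSpace ℝ (Fin d) → ℂ)
    (x : EuclideanSpace ℝ (Fin d)) : ℂ :=
  ∑ i : Fin d, pd i (pd i f) x

/-- The Helmholtz operator `L u = Δu + k²u`. -/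
noncomputable def Lop {d : ℕ} (k : ℝ) (f : EuclideanSpace ℝ (Fin d) → ℂ)
    (x : EuclideanSpace ℝ (Fin d)) : ℂ :=
  lap f x + (k : ℂ) ^ 2 * f x

/-- The Morawetz multiplier `M u = x·∇u - ikβu + ((d-1)/2) u`. -/
noncomputable def Mop {d : ℕ} (k β : ℝ) (f : EuclideanSpace ℝ (Fin d) → ℂ)
    (x : EuclideanSpace ℝ (Fin d)) : ℂ :=
  (∑ i : Fin d, (x i : ℂ) * pd i f x) - Complex.I * (k : ℂ) * (β : ℂ) * f x
    + (((d : ℂ) - 1) / 2) * f x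

/-- The Morawetz–Ludwig vector field
`F = conj(Mv)∇u + Mu conj(∇v) + x (k² u conj v - ∇u·conj(∇v))` (its `i`-th component). -/
noncomputable def MorawetzF {d : ℕ} (k β : ℝ) (u v : EuclideanSpace ℝ (Fin d) → ℂ)
    (i : Fin d) (x : EuclideanSpace ℝ (Fin d)) : ℂ :=
  (starRingEnd ℂ) (Mop k β v x) * pd i u x + Mop k β u x * (starRingEnd ℂ) (pd i v x)
    + (x i : ℂ) * ((k : ℂ) ^ 2 * u x * (starRingEnd ℂ) (v x)
        - ∑ j : Fin d, pd j u x * (starRingEnd ℂ) (pd j v x))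

open ComplexConjugate

lemma fderiv_conj_apply {E : Type*} [NormedAddCommGroup E] [NormedSpace ℝ E] (f : E → ℂ)
    (x w : E) : fderiv ℝ (fun y => conj (f y)) x w = conj (fderiv ℝ f x w) := by
  rw [show (fun y => conj (f y)) = conjCLE ∘ f from rfl, conjCLE.comp_fderiv]
  rfl

lemma ContDiffAt.differentiableAt_fderiv {𝕜 E F : Type*} [NontriviallyNormedField 𝕜]
    [NormedAddCommGroup E] [NormedSpace 𝕜 E] [NormedAddCommGroup F] [NormedSpace 𝕜 F]
    {f : E → F} {x : E} (hf : ContDiffAt 𝕜 2 f x) : DifferentiableAt 𝕜 (fderiv 𝕜 f) x :=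
  (hf.fderiv_right (m := 1) le_rfl).differentiableAt one_ne_zero

lemma fderiv_fderiv_apply_self_apply {E F : Type*} [NormedAddCommGroup E] [NormedSpace ℝ E]
    [NormedAddCommGroup F] [NormedSpace ℝ F] {f : E → F} {x : E} (hf : ContDiffAt ℝ 2 f x)
    (w : E) :
    fderiv ℝ (fun y => fderiv ℝ f y y) x w
      = fderiv ℝ f x w + fderiv ℝ (fun y => fderiv ℝ f y w) x x := by
  have hf' := hf.differentiableAt_fderiv
  rw [show (fun y => fderiv ℝ f y y) = fun y => fderiv ℝ f y (id y) from rfl,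
    fderiv_clm_apply hf' differentiableAt_id, fderiv_clm_apply hf' (differentiableAt_const w)]
  simp [hf.isSymmSndFDerivAt (by simp) x w]

section PartialDerivative

variable {d : ℕ} {x : EuclideanSpace ℝ (Fin d)} {f g : EuclideanSpace ℝ (Fin d) → ℂ}

lemma pd_add (i : Fin d) (hf : DifferentiableAt ℝ f x) (hg : DifferentiableAt ℝ g x) :
    pd i (fun y => f y + g y) x = pd i f x + pd i g x := by
  simp [pd, fderiv_fun_add hf hg]

lemma pd_sub (i : Fin d) (hf : DifferentiableAt ℝ f x) (hg : DifferentiableAt ℝ g x) :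
    pd i (fun y => f y - g y) x = pd i f x - pd i g x := by
  simp [pd, fderiv_fun_sub hf hg]

lemma pd_mul (i : Fin d) (hf : DifferentiableAt ℝ f x) (hg : DifferentiableAt ℝ g x) :
    pd i (fun y => f y * g y) x = pd i f x * g x + f x * pd i g x := by
  simp only [pd, fderiv_fun_mul hf hg, add_apply, smul_apply, smul_eq_mul]
  ring

lemma pd_const_mul (i : Fin d) (c : ℂ) (hf : DifferentiableAt ℝ f x) :
    pd i (fun y => c * f y) x = c * pd i f x := by
  simp [pd, fderiv_const_mul hf]

lemma pd_conj (i : Fin d) : pd i (fun y => conj (f y)) x = conj (pd i f x) :=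
  fderiv_conj_apply f x _

lemma pd_coord_self (i : Fin d) : pd i (fun y => ((y i : ℝ) : ℂ)) x = 1 := by
  have h : (fun y : EuclideanSpace ℝ (Fin d) => ((y i : ℝ) : ℂ))
      = ⇑(ofRealCLM.comp (EuclideanSpace.proj i : EuclideanSpace ℝ (Fin d) →L[ℝ] ℝ)) := rfl
  simp [pd, h, ContinuousLinearMap.fderiv]

lemma differentiableAt_pd (i : Fin d) (hf : ContDiffAt ℝ 2 f x) :
    DifferentiableAt ℝ (pd i f) x :=
  hf.differentiableAt_fderiv.clm_apply (differentiableAt_const _)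

lemma sum_coord_mul_pd (f : EuclideanSpace ℝ (Fin d) → ℂ) (x : EuclideanSpace ℝ (Fin d)) :
    ∑ i, (x i : ℂ) * pd i f x = fderiv ℝ f x x := by
  have hx : ∑ i, x i • EuclideanSpace.single i (1 : ℝ) = x := by
    simpa using (EuclideanSpace.basisFun (Fin d) ℝ).sum_repr x
  calc ∑ i, (x i : ℂ) * pd i f x = fderiv ℝ f x (∑ i, x i • EuclideanSpace.single i 1) := by
        simp [pd, Complex.real_smul]
    _ = fderiv ℝ f x x := by rw [hx]

end PartialDerivative

noncomputable def gradInner {d : ℕ} (u v : EuclideanSpace ℝ (Fin d) → ℂ)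
    (y : EuclideanSpace ℝ (Fin d)) : ℂ :=
  ∑ j, pd j u y * conj (pd j v y)

section Morawetz

variable {d : ℕ} {x : EuclideanSpace ℝ (Fin d)} {f u v : EuclideanSpace ℝ (Fin d) → ℂ} (k β : ℝ)

lemma Mop_eq (f : EuclideanSpace ℝ (Fin d) → ℂ) (x : EuclideanSpace ℝ (Fin d)) :
    Mop k β f x = fderiv ℝ f x x - I * k * β * f x + ((d - 1) / 2) * f x := by
  rw [Mop, sum_coord_mul_pd]

lemma differentiableAt_Mop (hf : ContDiffAt ℝ 2 f x) : DifferentiableAt ℝ (Mop k β f) x := by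
  have hf₁ := hf.differentiableAt two_ne_zero
  have hfx : DifferentiableAt ℝ (fun y => fderiv ℝ f y y) x :=
    hf.differentiableAt_fderiv.clm_apply differentiableAt_id
  rw [funext (Mop_eq k β f)]
  fun_prop

lemma pd_Mop (i : Fin d) (hf : ContDiffAt ℝ 2 f x) :
    pd i (Mop k β f) x = pd i f x + Mop k β (pd i f) x := by
  have hf₁ := hf.differentiableAt two_ne_zero
  have hfx : DifferentiableAt ℝ (fun y => fderiv ℝ f y y) x :=
    hf.differentiableAt_fderiv.clm_apply differentiableAt_id
  rw [funext (Mop_eq k β f), pd_add i (by fun_prop) (by fun_prop), pd_sub i hfx (by fun_prop),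
    pd_const_mul i _ hf₁, pd_const_mul i _ hf₁, Mop_eq, pd, fderiv_fderiv_apply_self_apply hf]
  unfold pd
  ring

lemma differentiableAt_gradInner (hu : ContDiffAt ℝ 2 u x) (hv : ContDiffAt ℝ 2 v x) :
    DifferentiableAt ℝ (gradInner u v) x := by
  have hu₁ := fun j => differentiableAt_pd j hu
  have hv₁ := fun j => differentiableAt_pd j hv
  unfold gradInner
  fun_prop

lemma fderiv_gradInner_apply (hu : ContDiffAt ℝ 2 u x) (hv : ContDiffAt ℝ 2 v x)
    (w : EuclideanSpace ℝ (Fin d)) :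
    fderiv ℝ (gradInner u v) x w
      = ∑ j, (fderiv ℝ (pd j u) x w * conj (pd j v x)
          + pd j u x * conj (fderiv ℝ (pd j v) x w)) := by
  have hu₁ := fun j => differentiableAt_pd j hu
  have hv₁ := fun j => differentiableAt_pd j hv
  unfold gradInner
  rw [fderiv_fun_sum (fun j _ => by fun_prop), sum_apply]
  refine Finset.sum_congr rfl fun j _ => ?_
  rw [fderiv_fun_mul (hu₁ j) (by fun_prop)]
  simp only [add_apply, smul_apply, smul_eq_mul, fderiv_conj_apply]
  ring

lemma sum_conj_pd_Mop_mul_add (hu : ContDiffAt ℝ 2 u x) (hv : ContDiffAt ℝ 2 v x) :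
    ∑ i, (conj (pd i (Mop k β v) x) * pd i u x + pd i (Mop k β u) x * conj (pd i v x))
      = (d + 1) * gradInner u v x + fderiv ℝ (gradInner u v) x x := by
  rw [fderiv_gradInner_apply hu hv, gradInner, Finset.mul_sum, ← Finset.sum_add_distrib]
  refine Finset.sum_congr rfl fun i _ => ?_
  rw [pd_Mop k β i hu, pd_Mop k β i hv, Mop_eq, Mop_eq]
  simp only [map_add, map_sub, map_mul, conj_I, conj_ofReal, map_div₀, map_natCast, map_one,
    map_ofNat]
  ring

lemma conj_Mop_mul_add (u v : EuclideanSpace ℝ (Fin d) → ℂ) (x : EuclideanSpace ℝ (Fin d)) :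
    conj (Mop k β v x) * u x + Mop k β u x * conj (v x)
      = fderiv ℝ u x x * conj (v x) + u x * conj (fderiv ℝ v x x) + (d - 1) * u x * conj (v x) := by
  simp only [Mop_eq, map_add, map_sub, map_mul, conj_I, conj_ofReal, map_div₀, map_natCast,
    map_one, map_ofNat]
  ring

lemma pd_MorawetzF (i : Fin d) (hu : ContDiffAt ℝ 2 u x) (hv : ContDiffAt ℝ 2 v x) :
    pd i (MorawetzF k β u v i) x
      = conj (pd i (Mop k β v) x) * pd i u x + conj (Mop k β v x) * pd i (pd i u) x
        + (pd i (Mop k β u) x * conj (pd i v x) + Mop k β u x * conj (pd i (pd i v) x))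
        + ((k ^ 2 * u x * conj (v x) - gradInner u v x)
          + (x i : ℂ) * pd i (fun y => k ^ 2 * u y * conj (v y) - gradInner u v y) x) := by
  have hu₁ := hu.differentiableAt two_ne_zero
  have hv₁ := hv.differentiableAt two_ne_zero
  have hui := differentiableAt_pd i hu
  have hvi := differentiableAt_pd i hv
  have hMu := differentiableAt_Mop k β hu
  have hMv := differentiableAt_Mop k β hv
  have hG := differentiableAt_gradInner hu hv
  have hxi : DifferentiableAt ℝ (fun y : EuclideanSpace ℝ (Fin d) => ((y i : ℝ) : ℂ)) x :=
    (ofRealCLM.comp (EuclideanSpace.proj i : EuclideanSpace ℝ (Fin d) →L[ℝ] ℝ)).differentiableAt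
  rw [show MorawetzF k β u v i = fun y => (conj (Mop k β v y) * pd i u y
      + Mop k β u y * conj (pd i v y))
      + (y i : ℂ) * (k ^ 2 * u y * conj (v y) - gradInner u v y) from rfl,
    pd_add i (by fun_prop) (by fun_prop), pd_add i (by fun_prop) (by fun_prop),
    pd_mul i (by fun_prop) hui, pd_mul i hMu (by fun_prop), pd_mul i hxi (by fun_prop),
    pd_conj, pd_conj, pd_coord_self, one_mul]

lemma sum_pd_MorawetzF (hu : ContDiffAt ℝ 2 u x) (hv : ContDiffAt ℝ 2 v x) :
    ∑ i, pd i (MorawetzF k β u v i) x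
      = conj (Mop k β v x) * lap u x + Mop k β u x * conj (lap v x)
        + ∑ i, (conj (pd i (Mop k β v) x) * pd i u x + pd i (Mop k β u) x * conj (pd i v x))
        + d * (k ^ 2 * u x * conj (v x) - gradInner u v x)
        + k ^ 2 * (fderiv ℝ u x x * conj (v x) + u x * conj (fderiv ℝ v x x))
        - fderiv ℝ (gradInner u v) x x := by
  have hu₁ := hu.differentiableAt two_ne_zero
  have hv₁ := hv.differentiableAt two_ne_zero
  have hG := differentiableAt_gradInner hu hv
  have hlap_u : ∑ i, conj (Mop k β v x) * pd i (pd i u) x = conj (Mop k β v x) * lap u x :=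
    (Finset.mul_sum _ _ _).symm
  have hlap_v : ∑ i, Mop k β u x * conj (pd i (pd i v) x) = Mop k β u x * conj (lap v x) := by
    rw [lap, map_sum, Finset.mul_sum]
  have hconst : ∑ _i : Fin d, (k ^ 2 * u x * conj (v x) - gradInner u v x)
      = d * (k ^ 2 * u x * conj (v x) - gradInner u v x) := by
    rw [Finset.sum_const, Finset.card_univ, Fintype.card_fin, nsmul_eq_mul]
  have heuler : ∑ i, (x i : ℂ) * pd i (fun y => k ^ 2 * u y * conj (v y) - gradInner u v y) x
      = k ^ 2 * (fderiv ℝ u x x * conj (v x) + u x * conj (fderiv ℝ v x x))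
        - fderiv ℝ (gradInner u v) x x := by
    rw [sum_coord_mul_pd, fderiv_fun_sub (by fun_prop) hG,
      fderiv_fun_mul (by fun_prop) (by fun_prop), fderiv_const_mul hu₁]
    simp only [sub_apply, add_apply, smul_apply, smul_eq_mul, fderiv_conj_apply]
    ring
  simp only [Finset.sum_congr rfl fun i _ => pd_MorawetzF k β i hu hv, Finset.sum_add_distrib,
    hlap_u, hlap_v, hconst, heuler]
  ring

end Morawetz

theorem morawetz_ludwig_identity_general {d : ℕ} (k β : ℝ)
    (Ω : Set (EuclideanSpace ℝ (Fin d))) (hΩ : IsOpen Ω)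
    (u v : EuclideanSpace ℝ (Fin d) → ℂ)
    (hu : ContDiffOn ℝ 2 u Ω) (hv : ContDiffOn ℝ 2 v Ω) :
    ∀ x ∈ Ω,
      (starRingEnd ℂ) (Mop k β v x) * Lop k u x + Mop k β u x * (starRingEnd ℂ) (Lop k v x)
        = (∑ i : Fin d, fderiv ℝ (MorawetzF k β u v i) x (EuclideanSpace.single i 1))
          - (∑ i : Fin d, pd i u x * (starRingEnd ℂ) (pd i v x))
          - (k : ℂ) ^ 2 * u x * (starRingEnd ℂ) (v x) := by
  intro x hx
  have hu₂ := hu.contDiffAt (hΩ.mem_nhds hx)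
  have hv₂ := hv.contDiffAt (hΩ.mem_nhds hx)
  have hLv : conj (Lop k v x) = conj (lap v x) + k ^ 2 * conj (v x) := by
    simp [Lop]
  rw [show ∑ i, fderiv ℝ (MorawetzF k β u v i) x (EuclideanSpace.single i 1)
      = ∑ i, pd i (MorawetzF k β u v i) x from rfl, sum_pd_MorawetzF k β hu₂ hv₂,
    sum_conj_pd_Mop_mul_add k β hu₂ hv₂, Lop, hLv,
    show ∑ i, pd i u x * conj (pd i v x) = gradInner u v x from rfl]
  linear_combination (k : ℂ) ^ 2 * conj_Mop_mul_add k β u v x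

/-- The pointwise Morawetz–Ludwig identity: for `u, v` twice continuously differentiable
on an open set `Ω ⊆ ℝ^d`, `k > 0`, `β ∈ ℝ`,
`conj(Mv)·Lu + Mu·conj(Lv) = ∇·F - ∇u·conj(∇v) - k² u conj(v)` pointwise in `Ω`. -/
theorem morawetz_ludwig_identity {d : ℕ} (k β : ℝ) (hk : 0 < k)
    (Ω : Set (EuclideanSpace ℝ (Fin d))) (hΩ : IsOpen Ω)
    (u v : EuclideanSpace ℝ (Fin d) → ℂ)
    (hu : ContDiffOn ℝ 2 u Ω) (hv : ContDiffOn ℝ 2 v Ω) :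
    ∀ x ∈ Ω,
      (starRingEnd ℂ) (Mop k β v x) * Lop k u x + Mop k β u x * (starRingEnd ℂ) (Lop k v x)
        = (∑ i : Fin d, fderiv ℝ (MorawetzF k β u v i) x (EuclideanSpace.single i 1))
          - (∑ i : Fin d, pd i u x * (starRingEnd ℂ) (pd i v x))
          - (k : ℂ) ^ 2 * u x * (starRingEnd ℂ) (v x) :=
  morawetz_ludwig_identity_general k β Ω hΩ u v hu hv
end

section
/- With the norms ‖·‖_{V₁} and ‖·‖_{V₂} as above, if v satisfies Δv + k²v = 0 in Ω, then (1/2)‖v‖²_{V₁} ≤ ‖v‖²_{V₂} ≤ ‖v‖²_{V₁}. -/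
lemma inv_mul_norm_sq_eq_of_add_smul_eq_zero {E : Type*} [SeminormedAddCommGroup E]
    [NormedSpace ℝ E] {c : ℝ} {u v : E} (h : u + c • v = 0) :
    c⁻¹ * ‖u‖ ^ 2 = c * ‖v‖ ^ 2 := by
  have hnorm : ‖u‖ = |c| * ‖v‖ := by
    rw [eq_neg_of_add_eq_zero_left h, norm_neg, norm_smul, Real.norm_eq_abs]
  rw [hnorm, mul_pow, sq_abs, sq c, ← mul_assoc, ← mul_assoc, inv_mul_mul_self]

/-- `Dv` and `v` stand for `Δv` and `v` in `L²(Ω)`; `g, bn, bt, bm` are the remaining squared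
norms entering `‖·‖_{V₁}` and `‖·‖_{V₂}`. -/
theorem V1_V2_norm_equivalence_helmholtz_general {X : Type*} [NormedAddCommGroup X] [NormedSpace ℝ X]
    (k Llen g bn bt bm : ℝ) (hL : 0 < Llen)
    (hg : 0 ≤ g) (hbn : 0 ≤ bn) (hbt : 0 ≤ bt) (hbm : 0 ≤ bm)
    (Dv v : X) (hHelm : Dv + (k ^ 2) • v = 0) :
    (1 / 2) *
        ((k ^ 2)⁻¹ * ‖Dv‖ ^ 2 + g + k ^ 2 * ‖v‖ ^ 2 + Llen * (bn + bt + k ^ 2 * bm))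
      ≤ ‖Dv + (k ^ 2) • v‖ ^ 2 + g + k ^ 2 * ‖v‖ ^ 2 + Llen * (bn + bt + k ^ 2 * bm) ∧
    ‖Dv + (k ^ 2) • v‖ ^ 2 + g + k ^ 2 * ‖v‖ ^ 2 + Llen * (bn + bt + k ^ 2 * bm)
      ≤ (k ^ 2)⁻¹ * ‖Dv‖ ^ 2 + g + k ^ 2 * ‖v‖ ^ 2 + Llen * (bn + bt + k ^ 2 * bm) := by
  rw [inv_mul_norm_sq_eq_of_add_smul_eq_zero hHelm, hHelm, norm_zero]
  have hv : 0 ≤ k ^ 2 * ‖v‖ ^ 2 := by positivity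
  have hboundary : 0 ≤ Llen * (bn + bt + k ^ 2 * bm) := by positivity
  constructor <;> linarith

/-- If `v` satisfies the homogeneous Helmholtz equation `Δv + k²v = 0` in `Ω`, then
`(1/2)‖v‖²_{V₁} ≤ ‖v‖²_{V₂} ≤ ‖v‖²_{V₁}`. As in the norm-equivalence statement,
`Dv` and `v` are the elements `Δv` and `v` of `L²(Ω)`, and `g, bn, bt, bm ≥ 0` are
the remaining squared norms appearing in `‖·‖_{V₁}` and `‖·‖_{V₂}`. -/
theorem V1_V2_norm_equivalence_helmholtz {X : Type*} [NormedAddCommGroup X] [NormedSpace ℝ X]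
    (k Llen g bn bt bm : ℝ) (hk : 0 < k) (hL : 0 < Llen)
    (hg : 0 ≤ g) (hbn : 0 ≤ bn) (hbt : 0 ≤ bt) (hbm : 0 ≤ bm)
    (Dv v : X) (hHelm : Dv + (k ^ 2) • v = 0) :
    (1 / 2) *
        ((k ^ 2)⁻¹ * ‖Dv‖ ^ 2 + g + k ^ 2 * ‖v‖ ^ 2 + Llen * (bn + bt + k ^ 2 * bm))
      ≤ ‖Dv + (k ^ 2) • v‖ ^ 2 + g + k ^ 2 * ‖v‖ ^ 2 + Llen * (bn + bt + k ^ 2 * bm) ∧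
    ‖Dv + (k ^ 2) • v‖ ^ 2 + g + k ^ 2 * ‖v‖ ^ 2 + Llen * (bn + bt + k ^ 2 * bm)
      ≤ (k ^ 2)⁻¹ * ‖Dv‖ ^ 2 + g + k ^ 2 * ‖v‖ ^ 2 + Llen * (bn + bt + k ^ 2 * bm) :=
  V1_V2_norm_equivalence_helmholtz_general k Llen g bn bt bm hL hg hbn hbt hbm Dv v hHelm
end
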